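/- For all characteristics ε, ε' ∈ (ℤ/2ℤ)^g with ε·ε' = 0, the substitution map sending p_T ↦ p̃_{T,χ} := P_T(…, v_{σ0}, …) − P_T(…, v_{σ1}, …) sends the quartic Q[ε,ε']² (written as a polynomial in the P_T) to Q[(ε,0),(ε',0)](v) · Q[(ε,0),(ε',1)](v); that is, writing Q[ε,ε'](x)² = ∑_T c_T P_T(x) for suitable constants c_T, one has ∑_T c_T p̃_{T,χ}(v) = Q[(ε,0),(ε',0)](v) · Q[(ε,0),(ε',1)](v) in ℂ[v]. -/

import Mathlib

/-!
Splitting `(ℤ/2ℤ)^{g+1}` along the last coordinate writes `Q[(ε,0),(ε',c)](v)` as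
`A + (-1)^c B`, where `A` and `B` are `Q[ε,ε']` evaluated at the variables `v_{σ0}` and `v_{σ1}`.
Hence the product for `c = 0, 1` is `A² - B²`, which is exactly the image of
`Q[ε,ε']² = ∑_T c_T P_T` under `p_T ↦ p̃_T = P_T(v_{σ0}) - P_T(v_{σ1})`.
-/

open MvPolynomial

/-- The group `(ℤ/2ℤ)^g`. -/
abbrev Vg (g : ℕ) : Type := Fin g → ZMod 2

instance (g : ℕ) : Finite (AddSubgroup (Vg g)) :=
  Finite.of_injective (fun T => (T : Set (Vg g))) SetLike.coe_injective

/-- The subgroups of `(ℤ/2ℤ)^g` of order at most four; these index the variables `p_T`. -/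
abbrev SmallSubgroup (g : ℕ) : Type := {T : AddSubgroup (Vg g) // Nat.card T ≤ 4}

noncomputable instance (g : ℕ) : Fintype (SmallSubgroup g) := Fintype.ofFinite _

/-- For a subgroup `T = {0, α, β, α+β}` of order at most `4`, the Heisenberg-invariant
quartic `P_T := ∑_ρ x_ρ x_{ρ+α} x_{ρ+β} x_{ρ+α+β}`, written intrinsically as
`∑_ρ (∏_{t ∈ T} x_{ρ+t})^{4/|T|}`. -/
noncomputable def PT {g : ℕ} (T : AddSubgroup (Vg g)) : MvPolynomial (Vg g) ℂ :=
  letI := Classical.decPred (fun t : Vg g => t ∈ T)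
  ∑ ρ : Vg g,
    (∏ t ∈ Finset.univ.filter (fun t : Vg g => t ∈ T), X (ρ + t)) ^ (4 / Nat.card T)

/-- `p̃_{T,χ}(v) := P_T(…, v_{σ0}, …) − P_T(…, v_{σ1}, …)`, a quartic in the `2^{g+1}`
variables `v_τ`, `τ ∈ (ℤ/2ℤ)^{g+1}`. -/
noncomputable def ptilde {g : ℕ} (T : AddSubgroup (Vg g)) : MvPolynomial (Vg (g + 1)) ℂ :=
  rename (fun σ : Vg g => Fin.snoc σ (0 : ZMod 2)) (PT T)
    - rename (fun σ : Vg g => Fin.snoc σ (1 : ZMod 2)) (PT T)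

/-- The quadratic polynomial `Q[ε,ε'] := ∑_σ (−1)^{σ·ε'} x_σ x_{σ+ε}`. -/
noncomputable def Qe {n : ℕ} (ε ε' : Vg n) : MvPolynomial (Vg n) ℂ :=
  ∑ σ : Vg n, ((-1 : ℂ) ^ (∑ i, σ i * ε' i : ZMod 2).val) • (X σ * X (σ + ε))

theorem Fin.snoc_add_snoc {n : ℕ} {M : Type*} [Add M] (a b : Fin n → M) (x y : M) :
    (Fin.snoc a x : Fin (n + 1) → M) + Fin.snoc b y = Fin.snoc (a + b) (x + y) := by
  funext i
  induction i using Fin.lastCases with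
  | last => simp
  | cast i => simp

theorem Fin.sum_snoc_mul_snoc {n : ℕ} {R : Type*} [NonUnitalNonAssocSemiring R]
    (a b : Fin n → R) (x y : R) :
    ∑ i, (Fin.snoc a x : Fin (n + 1) → R) i * (Fin.snoc b y : Fin (n + 1) → R) i
      = ∑ i, a i * b i + x * y := by
  simp [Fin.sum_univ_castSucc]

theorem neg_one_pow_val_add {R : Type*} [Ring R] (a b : ZMod 2) :
    (-1 : R) ^ (a + b).val = (-1) ^ a.val * (-1) ^ b.val := by
  rw [ZMod.val_add, ← neg_one_pow_eq_pow_mod_two (R := R), pow_add]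

theorem sum_vg_succ {M : Type*} [AddCommMonoid M] {g : ℕ} (f : Vg (g + 1) → M) :
    ∑ τ, f τ = ∑ σ : Vg g, f (Fin.snoc σ 0) + ∑ σ : Vg g, f (Fin.snoc σ 1) := by
  rw [← (Fin.snocEquiv fun _ => ZMod 2).sum_comp, Fintype.sum_prod_type]
  exact Fin.sum_univ_two _

theorem Qe_snoc_zero_snoc {g : ℕ} (ε ε' : Vg g) (c : ZMod 2) :
    Qe (Fin.snoc ε 0) (Fin.snoc ε' c)
      = rename (fun σ : Vg g => Fin.snoc σ (0 : ZMod 2)) (Qe ε ε')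
        + ((-1 : ℂ) ^ c.val) • rename (fun σ : Vg g => Fin.snoc σ (1 : ZMod 2)) (Qe ε ε') := by
  simp only [Qe, sum_vg_succ, map_sum, Finset.smul_sum, Fin.sum_snoc_mul_snoc, Fin.snoc_add_snoc,
    neg_one_pow_val_add, map_smul, map_mul, rename_X, smul_smul, add_zero, zero_mul, one_mul]
  congr 1
  refine Finset.sum_congr rfl fun σ _ => ?_
  rw [mul_comm]

theorem sum_smul_ptilde {g : ℕ} {ι : Type*} [Fintype ι] (c : ι → ℂ) (T : ι → AddSubgroup (Vg g)) :
    ∑ i, c i • ptilde (T i)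
      = rename (fun σ : Vg g => Fin.snoc σ (0 : ZMod 2)) (∑ i, c i • PT (T i))
        - rename (fun σ : Vg g => Fin.snoc σ (1 : ZMod 2)) (∑ i, c i • PT (T i)) := by
  simp only [ptilde, smul_sub, Finset.sum_sub_distrib, map_sum, map_smul]

theorem ptilde_of_Qe_sq_general (g : ℕ) (ε ε' : Vg g)
    (c : SmallSubgroup g → ℂ)
    (hc : (Qe ε ε') ^ 2 = ∑ T : SmallSubgroup g, c T • PT T.1) :
    ∑ T : SmallSubgroup g, c T • ptilde T.1
      = Qe (Fin.snoc ε (0 : ZMod 2)) (Fin.snoc ε' (0 : ZMod 2))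
        * Qe (Fin.snoc ε (0 : ZMod 2)) (Fin.snoc ε' (1 : ZMod 2)) := by
  rw [sum_smul_ptilde, ← hc, Qe_snoc_zero_snoc, Qe_snoc_zero_snoc]
  simp only [ZMod.val_zero, ZMod.val_one, pow_zero, pow_one, one_smul, neg_one_smul, map_pow]
  ring

/-- If `Q[ε,ε']² = ∑_T c_T P_T` (with `ε·ε' = 0`), then the substitution `p_T ↦ p̃_{T,χ}`
sends it to `Q[(ε,0),(ε',0)](v) · Q[(ε,0),(ε',1)](v)`. -/
theorem ptilde_of_Qe_sq (g : ℕ) (ε ε' : Vg g)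
    (h0 : (∑ i, ε i * ε' i : ZMod 2) = 0) (c : SmallSubgroup g → ℂ)
    (hc : (Qe ε ε') ^ 2 = ∑ T : SmallSubgroup g, c T • PT T.1) :
    ∑ T : SmallSubgroup g, c T • ptilde T.1
      = Qe (Fin.snoc ε (0 : ZMod 2)) (Fin.snoc ε' (0 : ZMod 2))
        * Qe (Fin.snoc ε (0 : ZMod 2)) (Fin.snoc ε' (1 : ZMod 2)) :=
  ptilde_of_Qe_sq_general g ε ε' c hc
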